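/- Let A be a bounded self-adjoint Fredholm operator on a complex Hilbert space H and let p be the orthogonal projection of H onto ker(A). Then p commutes with A; for every real number t ≠ 0 the operator A + t·p is invertible; if ker(A) ≠ 0 then the spectrum of A + t·p equals (spectrum(A) \ {0}) ∪ {t}; and if in addition A is neither essentially positive nor essentially negative, then A + t·p is neither essentially positive nor essentially negative. -/

import Mathlib

open scoped ComplexOrder

/-- A bounded operator on a Hilbert space is Fredholm if its kernel is finite-dimensional
and its range is closed and of finite codimension. -/
def IsFredholm {H : Type*} [NormedAddCommGroup H] [InnerProductSpace ℂ H]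
    (T : H →L[ℂ] H) : Prop :=
  FiniteDimensional ℂ (LinearMap.ker (T : H →ₗ[ℂ] H)) ∧ IsClosed (LinearMap.range (T : H →ₗ[ℂ] H) : Set H) ∧
    FiniteDimensional ℂ (H ⧸ LinearMap.range (T : H →ₗ[ℂ] H))

/-- A bounded self-adjoint operator is essentially positive if there is a closed invariant
subspace of finite codimension on which it is positive definite. -/
def EssentiallyPositive {H : Type*} [NormedAddCommGroup H] [InnerProductSpace ℂ H]
    (A : H →L[ℂ] H) : Prop :=
  ∃ U : Submodule ℂ H, IsClosed (U : Set H) ∧ FiniteDimensional ℂ (H ⧸ U) ∧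
    (∀ u ∈ U, A u ∈ U) ∧ ∀ u ∈ U, u ≠ 0 → 0 < (inner ℂ (A u) u : ℂ)

open Classical in
/-- The orthogonal projection of `H` onto the kernel of `T`, as a bounded operator
`H →L[ℂ] H` (defined to be `0` if the kernel is not finite-dimensional). -/
noncomputable def kerProjection {H : Type*} [NormedAddCommGroup H] [InnerProductSpace ℂ H]
    (T : H →L[ℂ] H) : H →L[ℂ] H :=
  if h : FiniteDimensional ℂ (LinearMap.ker (T : H →ₗ[ℂ] H)) then
    haveI := h
    (LinearMap.ker (T : H →ₗ[ℂ] H)).subtypeL.comp (Submodule.orthogonalProjectionOnto (LinearMap.ker (T : H →ₗ[ℂ] H)))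
  else 0

/-! Self-adjointness and closed range give `range A = (ker A)ᗮ`, so `A` and the projection `p`
onto `ker A` annihilate each other: `A * p = p * A = 0`. Thus `A + t • p` is `A` on `(ker A)ᗮ`,
where `A` is bijective, and `t` on `ker A`. For `μ ≠ 0` the factorisation
`μ - (A + t • p) = (μ - A) * (1 - (t / μ) • p)`, with `1 - s • p` invertible for `s ≠ 1`,
reduces the spectrum to that of `A`. Essential positivity transfers along `(ker A)ᗮ`, an
invariant closed subspace of finite codimension on which `A + t • p` and `A` agree. -/

section Algebra

variable {𝕜 R : Type*} [Field 𝕜] [Ring R] [Algebra 𝕜 R] {a p : R}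

theorem IsIdempotentElem.isUnit_one_sub_smul (hp : IsIdempotentElem p) {s : 𝕜} (hs : s ≠ 1) :
    IsUnit (1 - s • p) := by
  have hmul : ∀ b c : 𝕜, (1 - b • p) * (1 - c • p) = 1 - (b + c - b * c) • p := by
    intro b c
    simp only [sub_mul, mul_sub, one_mul, mul_one, smul_mul_smul, hp.eq, sub_smul, add_smul]
    abel
  have hs' : s - 1 ≠ 0 := sub_ne_zero.mpr hs
  have hcoef : s + s / (s - 1) - s * (s / (s - 1)) = 0 := by field_simp; ring
  have hcoef' : s / (s - 1) + s - s / (s - 1) * s = 0 := by field_simp; ring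
  exact ⟨⟨1 - s • p, 1 - (s / (s - 1)) • p, by rw [hmul, hcoef, zero_smul, sub_zero],
    by rw [hmul, hcoef', zero_smul, sub_zero]⟩, rfl⟩

theorem algebraMap_sub_add_smul_eq_mul (hap : a * p = 0) {μ : 𝕜} (hμ : μ ≠ 0) (t : 𝕜) :
    algebraMap 𝕜 R μ - (a + t • p) = (algebraMap 𝕜 R μ - a) * (1 - (t / μ) • p) := by
  rw [sub_mul, mul_sub, mul_sub, mul_one, mul_one, mul_smul_comm, mul_smul_comm, hap, smul_zero,
    sub_zero, Algebra.algebraMap_eq_smul_one, smul_mul_assoc, one_mul, smul_smul,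
    div_mul_cancel₀ _ hμ]
  abel

theorem spectrum_add_smul_of_isIdempotentElem (hp : IsIdempotentElem p) (hp0 : p ≠ 0)
    (hap : a * p = 0) {t : 𝕜} (ht : t ≠ 0) (hunit : IsUnit (a + t • p)) :
    spectrum 𝕜 (a + t • p) = spectrum 𝕜 a \ {0} ∪ {t} := by
  ext μ
  by_cases hμt : μ = t
  · subst hμt
    suffices ¬IsUnit (algebraMap 𝕜 R μ - (a + μ • p)) by simpa [spectrum.mem_iff] using this
    intro hu
    refine hp0 ((hu.mul_right_eq_zero).mp ?_)
    rw [sub_mul, add_mul, hap, smul_mul_assoc, hp.eq, zero_add, Algebra.algebraMap_eq_smul_one,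
      smul_mul_assoc, one_mul, sub_self]
  by_cases hμ0 : μ = 0
  · subst hμ0
    simp [spectrum.zero_mem_iff, hunit, Ne.symm ht]
  have hfactor : IsUnit (1 - (t / μ) • p) :=
    hp.isUnit_one_sub_smul (by rwa [Ne, div_eq_one_iff_eq hμ0, eq_comm])
  simp [spectrum.mem_iff, hμt, hμ0, algebraMap_sub_add_smul_eq_mul hap hμ0, hfactor.mul_right_iff]

end Algebra

section Operator

variable {𝕜 E : Type*} [RCLike 𝕜] [NormedAddCommGroup E] [InnerProductSpace 𝕜 E]

theorem ContinuousLinearMap.mul_starProjection_ker (A : E →L[𝕜] E)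
    [(LinearMap.ker (A : E →ₗ[𝕜] E)).HasOrthogonalProjection] :
    A * (LinearMap.ker (A : E →ₗ[𝕜] E)).starProjection = 0 := by
  ext x
  exact (LinearMap.ker (A : E →ₗ[𝕜] E)).starProjection_apply_mem x

theorem Submodule.starProjection_ne_zero {K : Submodule 𝕜 E} [K.HasOrthogonalProjection]
    (hK : K ≠ ⊥) : K.starProjection ≠ 0 := by
  intro h
  apply hK
  rw [← K.range_starProjection, h]
  exact LinearMap.range_zero

variable [CompleteSpace E] {A : E →L[𝕜] E}

theorem IsSelfAdjoint.range_le_orthogonal_ker (hA : IsSelfAdjoint A) :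
    LinearMap.range (A : E →ₗ[𝕜] E) ≤ (LinearMap.ker (A : E →ₗ[𝕜] E))ᗮ := by
  rw [A.orthogonal_ker, hA.adjoint_eq]
  exact Submodule.le_topologicalClosure _

theorem IsSelfAdjoint.range_eq_orthogonal_ker (hA : IsSelfAdjoint A)
    (hA_closed : IsClosed (LinearMap.range (A : E →ₗ[𝕜] E) : Set E)) :
    LinearMap.range (A : E →ₗ[𝕜] E) = (LinearMap.ker (A : E →ₗ[𝕜] E))ᗮ := by
  rw [A.orthogonal_ker, hA.adjoint_eq, hA_closed.submodule_topologicalClosure_eq]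

theorem IsSelfAdjoint.starProjection_ker_mul (hA : IsSelfAdjoint A)
    [(LinearMap.ker (A : E →ₗ[𝕜] E)).HasOrthogonalProjection] :
    (LinearMap.ker (A : E →ₗ[𝕜] E)).starProjection * A = 0 := by
  ext x
  exact (Submodule.starProjection_apply_eq_zero_iff _).mpr
    (hA.range_le_orthogonal_ker (LinearMap.mem_range_self _ x))

theorem IsSelfAdjoint.isUnit_add_smul_starProjection_ker (hA : IsSelfAdjoint A)
    (hA_closed : IsClosed (LinearMap.range (A : E →ₗ[𝕜] E) : Set E))
    [(LinearMap.ker (A : E →ₗ[𝕜] E)).HasOrthogonalProjection] {t : 𝕜} (ht : t ≠ 0) :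
    IsUnit (A + t • (LinearMap.ker (A : E →ₗ[𝕜] E)).starProjection) := by
  set K := LinearMap.ker (A : E →ₗ[𝕜] E)
  set p := K.starProjection
  have hAp (x : E) : A (p x) = 0 := congr($(A.mul_starProjection_ker) x)
  have hpA (x : E) : p (A x) = 0 := congr($(hA.starProjection_ker_mul) x)
  have hpp (x : E) : p (p x) = p x := congr($(K.isIdempotentElem_starProjection.eq) x)
  rw [ContinuousLinearMap.isUnit_iff_bijective]
  constructor
  · rw [injective_iff_map_eq_zero]
    intro z hz
    simp only [add_apply, smul_apply] at hz
    have hpz : p z = 0 := by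
      simpa [hpA, hpp, ht] using congr(p $hz)
    rw [hpz, smul_zero, add_zero] at hz
    rw [← Submodule.starProjection_eq_self_iff.mpr (show z ∈ K from hz), hpz]
  · intro y
    -- `A` maps onto `Kᗮ`, and `t • p` takes care of the `K`-component of `y`.
    obtain ⟨z, hz⟩ : y - p y ∈ LinearMap.range (A : E →ₗ[𝕜] E) := by
      rw [hA.range_eq_orthogonal_ker hA_closed]
      exact K.sub_starProjection_mem_orthogonal y
    refine ⟨z - p z + t⁻¹ • p y, ?_⟩
    simp only [add_apply, smul_apply, map_add, map_sub, map_smul, hAp, hpp, zero_add, smul_smul,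
      inv_mul_cancel₀ ht, one_smul]
    rw [show A z = y - p y from hz]
    abel

end Operator

theorem Submodule.finiteDimensional_quotient_inf {𝕜 E : Type*} [Field 𝕜] [AddCommGroup E]
    [Module 𝕜 E] (U V : Submodule 𝕜 E) [FiniteDimensional 𝕜 (E ⧸ U)]
    [FiniteDimensional 𝕜 (E ⧸ V)] : FiniteDimensional 𝕜 (E ⧸ (U ⊓ V)) := by
  have hker : LinearMap.ker (U.mkQ.prod V.mkQ) = U ⊓ V := by
    rw [LinearMap.ker_prod, Submodule.ker_mkQ, Submodule.ker_mkQ]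
  refine FiniteDimensional.of_injective ((U ⊓ V).liftQ (U.mkQ.prod V.mkQ) hker.ge) ?_
  rw [← LinearMap.ker_eq_bot]
  exact Submodule.ker_liftQ_eq_bot _ _ _ hker.le

theorem Submodule.finiteDimensional_quotient_orthogonal {𝕜 E : Type*} [RCLike 𝕜]
    [NormedAddCommGroup E] [InnerProductSpace 𝕜 E] (K : Submodule 𝕜 E) [FiniteDimensional 𝕜 K] :
    FiniteDimensional 𝕜 (E ⧸ Kᗮ) :=
  (Kᗮ.quotientEquivOfIsCompl K K.isCompl_orthogonal.symm).symm.finiteDimensional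

theorem EssentiallyPositive.of_eqOn {H : Type*} [NormedAddCommGroup H] [InnerProductSpace ℂ H]
    {A B : H →L[ℂ] H} {V : Submodule ℂ H} (hV : IsClosed (V : Set H))
    [FiniteDimensional ℂ (H ⧸ V)] (hAV : ∀ v ∈ V, A v ∈ V) (hBA : Set.EqOn B A V)
    (hB : EssentiallyPositive B) : EssentiallyPositive A := by
  obtain ⟨U, hU, _, hBU, hBpos⟩ := hB
  refine ⟨U ⊓ V, hU.inter hV, U.finiteDimensional_quotient_inf V, ?_, ?_⟩
  · rintro u ⟨huU, huV⟩
    exact ⟨hBA huV ▸ hBU u huU, hAV u huV⟩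
  · rintro u ⟨huU, huV⟩ hu
    exact hBA huV ▸ hBpos u huU hu

/-- Let `A` be a bounded self-adjoint Fredholm operator and `p` the
orthogonal projection onto its kernel.  Then `p` commutes with `A`; `A + t • p` is
invertible for every real `t ≠ 0`; if the kernel is nonzero then
`spectrum (A + t • p) = (spectrum A \ {0}) ∪ {t}`; and if `A` is neither essentially
positive nor essentially negative, then so is `A + t • p`. -/
theorem stmt2 {H : Type*} [NormedAddCommGroup H] [InnerProductSpace ℂ H] [CompleteSpace H]
    (A : H →L[ℂ] H) (hsa : IsSelfAdjoint A) (hfred : IsFredholm A) :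
    Commute A (kerProjection A) ∧
    (∀ t : ℝ, t ≠ 0 → IsUnit (A + (t : ℂ) • kerProjection A)) ∧
    (LinearMap.ker (A : H →ₗ[ℂ] H) ≠ ⊥ → ∀ t : ℝ, t ≠ 0 →
      spectrum ℂ (A + (t : ℂ) • kerProjection A) = (spectrum ℂ A \ {0}) ∪ {(t : ℂ)}) ∧
    ((¬EssentiallyPositive A ∧ ¬EssentiallyPositive (-A)) → ∀ t : ℝ, t ≠ 0 →
      ¬EssentiallyPositive (A + (t : ℂ) • kerProjection A) ∧
      ¬EssentiallyPositive (-(A + (t : ℂ) • kerProjection A))) := by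
  set K := LinearMap.ker (A : H →ₗ[ℂ] H)
  have : FiniteDimensional ℂ K := hfred.1
  have := K.finiteDimensional_quotient_orthogonal
  have hp : kerProjection A = K.starProjection := dif_pos hfred.1
  have hunit (t : ℝ) (ht : t ≠ 0) : IsUnit (A + (t : ℂ) • K.starProjection) :=
    hsa.isUnit_add_smul_starProjection_ker hfred.2.1 (Complex.ofReal_ne_zero.mpr ht)
  have hAV : ∀ v ∈ Kᗮ, A v ∈ Kᗮ := fun v _ => hsa.range_le_orthogonal_ker ⟨v, rfl⟩
  have heqOn (t : ℝ) : Set.EqOn (A + (t : ℂ) • K.starProjection) A Kᗮ := fun v hv => by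
    simp [(K.starProjection_apply_eq_zero_iff).mpr hv]
  rw [hp]
  refine ⟨?_, hunit, fun hK t ht => ?_, fun ⟨hpos, hneg⟩ t ht => ⟨fun h => ?_, fun h => ?_⟩⟩
  · rw [Commute, SemiconjBy, A.mul_starProjection_ker, hsa.starProjection_ker_mul]
  · exact spectrum_add_smul_of_isIdempotentElem K.isIdempotentElem_starProjection
      (Submodule.starProjection_ne_zero hK) A.mul_starProjection_ker
      (Complex.ofReal_ne_zero.mpr ht) (hunit t ht)
  · exact hpos (h.of_eqOn K.isClosed_orthogonal hAV (heqOn t))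
  · exact hneg (h.of_eqOn K.isClosed_orthogonal (fun v hv => Kᗮ.neg_mem (hAV v hv))
      fun v hv => congrArg Neg.neg (heqOn t hv))
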